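/- Let k be a field, let u, v ∈ k be nonzero, and suppose f(u,v) ≠ 0 where f(u,v) = (u⁴−1)(v⁴−1)(u²−v²)(u²v²−1). Then for every choice of three distinct triples among the six coordinate triples (u²,u,1), (u^{−2},u^{−1},1), (v²,v,1), (v^{−2},v^{−1},1), (1,0,0), (0,1,0), the 3×3 matrix whose rows are these three triples has nonzero determinant; in particular, no three of the corresponding six points of ℙ²(k) lie on a line. -/
import Mathlib

lemma det_swap12 {k : Type*} [Field k] (a b c : Fin 3 → k) :
    (Matrix.of ![a, b, c]).det = -(Matrix.of ![b, a, c]).det := by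
  simp [Matrix.det_fin_three]; ring

lemma det_swap23 {k : Type*} [Field k] (a b c : Fin 3 → k) :
    (Matrix.of ![a, b, c]).det = -(Matrix.of ![a, c, b]).det := by
  simp [Matrix.det_fin_three]; ring

lemma det_swap13 {k : Type*} [Field k] (a b c : Fin 3 → k) :
    (Matrix.of ![a, b, c]).det = -(Matrix.of ![c, b, a]).det := by
  simp [Matrix.det_fin_three]; ring

/-- The six coordinate triples `(u²,u,1), (u⁻²,u⁻¹,1), (v²,v,1), (v⁻²,v⁻¹,1), (1,0,0), (0,1,0)`. -/
def sixTriples {k : Type*} [Field k] (u v : k) : Fin 6 → Fin 3 → k :=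
  ![![u ^ 2, u, 1], ![(u ^ 2)⁻¹, u⁻¹, 1], ![v ^ 2, v, 1], ![(v ^ 2)⁻¹, v⁻¹, 1],
    ![1, 0, 0], ![0, 1, 0]]

theorem no_three_collinear {k : Type*} [Field k] (u v : k) (hu : u ≠ 0) (hv : v ≠ 0)
    (hf : (u ^ 4 - 1) * (v ^ 4 - 1) * (u ^ 2 - v ^ 2) * (u ^ 2 * v ^ 2 - 1) ≠ 0) :
    ∀ i j l : Fin 6, i ≠ j → i ≠ l → j ≠ l →
      (Matrix.of ![sixTriples u v i, sixTriples u v j, sixTriples u v l]).det ≠ 0 ∧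
      ¬∃ α β γ : k, (α, β, γ) ≠ (0, 0, 0) ∧
        ∀ m ∈ ({i, j, l} : Set (Fin 6)),
          α * sixTriples u v m 0 + β * sixTriples u v m 1 + γ * sixTriples u v m 2 = 0 := by
  have hA : u ^ 4 - 1 ≠ 0 := fun h => hf (by
    linear_combination ((v ^ 4 - 1) * (u ^ 2 - v ^ 2) * (u ^ 2 * v ^ 2 - 1)) * h)
  have hB : v ^ 4 - 1 ≠ 0 := fun h => hf (by
    linear_combination ((u ^ 4 - 1) * (u ^ 2 - v ^ 2) * (u ^ 2 * v ^ 2 - 1)) * h)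
  have hC : u ^ 2 - v ^ 2 ≠ 0 := fun h => hf (by
    linear_combination ((u ^ 4 - 1) * (v ^ 4 - 1) * (u ^ 2 * v ^ 2 - 1)) * h)
  have hD : u ^ 2 * v ^ 2 - 1 ≠ 0 := fun h => hf (by
    linear_combination ((u ^ 4 - 1) * (v ^ 4 - 1) * (u ^ 2 - v ^ 2)) * h)
  have hU : u ^ 2 - 1 ≠ 0 := fun h => hA (by linear_combination (u ^ 2 + 1) * h)
  have hU2 : u ^ 2 + 1 ≠ 0 := fun h => hA (by linear_combination (u ^ 2 - 1) * h)
  have hV : v ^ 2 - 1 ≠ 0 := fun h => hB (by linear_combination (v ^ 2 + 1) * h)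
  have hV2 : v ^ 2 + 1 ≠ 0 := fun h => hB (by linear_combination (v ^ 2 - 1) * h)
  have f02 : u - v ≠ 0 := fun h => hC (by linear_combination (u + v) * h)
  have g02 : u + v ≠ 0 := fun h => hC (by linear_combination (u - v) * h)
  have hw1 : u * v - 1 ≠ 0 := fun h => hD (by linear_combination (u * v + 1) * h)
  have hw2 : u * v + 1 ≠ 0 := fun h => hD (by linear_combination (u * v - 1) * h)
  have f01 : u - u⁻¹ ≠ 0 := fun h => hU (by field_simp at h; linear_combination h)
  have g01 : u + u⁻¹ ≠ 0 := fun h => hU2 (by field_simp at h; linear_combination h)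
  have f23 : v - v⁻¹ ≠ 0 := fun h => hV (by field_simp at h; linear_combination h)
  have g23 : v + v⁻¹ ≠ 0 := fun h => hV2 (by field_simp at h; linear_combination h)
  have f03 : u - v⁻¹ ≠ 0 := fun h => hw1 (by field_simp at h; linear_combination h)
  have g03 : u + v⁻¹ ≠ 0 := fun h => hw2 (by field_simp at h; linear_combination h)
  have f12 : u⁻¹ - v ≠ 0 := fun h => hw1 (by field_simp at h; linear_combination -h)
  have g12 : u⁻¹ + v ≠ 0 := fun h => hw2 (by field_simp at h; linear_combination h)
  have f13 : u⁻¹ - v⁻¹ ≠ 0 := fun h => f02 (by field_simp at h; linear_combination -h)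
  have g13 : u⁻¹ + v⁻¹ ≠ 0 := fun h => g02 (by field_simp at h; linear_combination h)
  have sorted : ∀ p q r : Fin 6, p < q → q < r →
      (Matrix.of ![sixTriples u v p, sixTriples u v q, sixTriples u v r]).det ≠ 0 := by
    intro p q r hpq hqr
    fin_cases p <;> fin_cases q <;> fin_cases r <;>
      first
      | exact absurd hpq (by decide)
      | exact absurd hqr (by decide)
      | skip
    · -- case (0, 1, 2)
      refine ne_of_eq_of_ne (b := (u - u⁻¹) * ((u⁻¹ - v) * (u - v))) ?_ (mul_ne_zero f01 (mul_ne_zero f12 f02))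
      show (Matrix.of ![![u ^ 2, u, 1], ![(u ^ 2)⁻¹, u⁻¹, 1], ![v ^ 2, v, 1]]).det = (u - u⁻¹) * ((u⁻¹ - v) * (u - v))
      simp only [Matrix.det_fin_three, Matrix.of_apply, Matrix.cons_val', Matrix.cons_val_zero,
        Matrix.cons_val_one, Matrix.head_cons, Matrix.empty_val', Matrix.cons_val_fin_one,
        Matrix.head_fin_const, Matrix.cons_val_two, Matrix.tail_cons, ← inv_pow]
      ring
    · -- case (0, 1, 3)
      refine ne_of_eq_of_ne (b := (u - u⁻¹) * ((u⁻¹ - v⁻¹) * (u - v⁻¹))) ?_ (mul_ne_zero f01 (mul_ne_zero f13 f03))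
      show (Matrix.of ![![u ^ 2, u, 1], ![(u ^ 2)⁻¹, u⁻¹, 1], ![(v ^ 2)⁻¹, v⁻¹, 1]]).det = (u - u⁻¹) * ((u⁻¹ - v⁻¹) * (u - v⁻¹))
      simp only [Matrix.det_fin_three, Matrix.of_apply, Matrix.cons_val', Matrix.cons_val_zero,
        Matrix.cons_val_one, Matrix.head_cons, Matrix.empty_val', Matrix.cons_val_fin_one,
        Matrix.head_fin_const, Matrix.cons_val_two, Matrix.tail_cons, ← inv_pow]
      ring
    · -- case (0, 1, 4)
      refine ne_of_eq_of_ne (b := (u - u⁻¹)) ?_ (f01)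
      show (Matrix.of ![![u ^ 2, u, 1], ![(u ^ 2)⁻¹, u⁻¹, 1], ![1, 0, 0]]).det = (u - u⁻¹)
      simp only [Matrix.det_fin_three, Matrix.of_apply, Matrix.cons_val', Matrix.cons_val_zero,
        Matrix.cons_val_one, Matrix.head_cons, Matrix.empty_val', Matrix.cons_val_fin_one,
        Matrix.head_fin_const, Matrix.cons_val_two, Matrix.tail_cons, ← inv_pow]
      ring
    · -- case (0, 1, 5)
      refine ne_of_eq_of_ne (b := -((u - u⁻¹) * (u + u⁻¹))) ?_ (neg_ne_zero.mpr (mul_ne_zero f01 g01))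
      show (Matrix.of ![![u ^ 2, u, 1], ![(u ^ 2)⁻¹, u⁻¹, 1], ![0, 1, 0]]).det = -((u - u⁻¹) * (u + u⁻¹))
      simp only [Matrix.det_fin_three, Matrix.of_apply, Matrix.cons_val', Matrix.cons_val_zero,
        Matrix.cons_val_one, Matrix.head_cons, Matrix.empty_val', Matrix.cons_val_fin_one,
        Matrix.head_fin_const, Matrix.cons_val_two, Matrix.tail_cons, ← inv_pow]
      ring
    · -- case (0, 2, 3)
      refine ne_of_eq_of_ne (b := (u - v) * ((v - v⁻¹) * (u - v⁻¹))) ?_ (mul_ne_zero f02 (mul_ne_zero f23 f03))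
      show (Matrix.of ![![u ^ 2, u, 1], ![v ^ 2, v, 1], ![(v ^ 2)⁻¹, v⁻¹, 1]]).det = (u - v) * ((v - v⁻¹) * (u - v⁻¹))
      simp only [Matrix.det_fin_three, Matrix.of_apply, Matrix.cons_val', Matrix.cons_val_zero,
        Matrix.cons_val_one, Matrix.head_cons, Matrix.empty_val', Matrix.cons_val_fin_one,
        Matrix.head_fin_const, Matrix.cons_val_two, Matrix.tail_cons, ← inv_pow]
      ring
    · -- case (0, 2, 4)
      refine ne_of_eq_of_ne (b := (u - v)) ?_ (f02)
      show (Matrix.of ![![u ^ 2, u, 1], ![v ^ 2, v, 1], ![1, 0, 0]]).det = (u - v)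
      simp only [Matrix.det_fin_three, Matrix.of_apply, Matrix.cons_val', Matrix.cons_val_zero,
        Matrix.cons_val_one, Matrix.head_cons, Matrix.empty_val', Matrix.cons_val_fin_one,
        Matrix.head_fin_const, Matrix.cons_val_two, Matrix.tail_cons, ← inv_pow]
      ring
    · -- case (0, 2, 5)
      refine ne_of_eq_of_ne (b := -((u - v) * (u + v))) ?_ (neg_ne_zero.mpr (mul_ne_zero f02 g02))
      show (Matrix.of ![![u ^ 2, u, 1], ![v ^ 2, v, 1], ![0, 1, 0]]).det = -((u - v) * (u + v))
      simp only [Matrix.det_fin_three, Matrix.of_apply, Matrix.cons_val', Matrix.cons_val_zero,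
        Matrix.cons_val_one, Matrix.head_cons, Matrix.empty_val', Matrix.cons_val_fin_one,
        Matrix.head_fin_const, Matrix.cons_val_two, Matrix.tail_cons, ← inv_pow]
      ring
    · -- case (0, 3, 4)
      refine ne_of_eq_of_ne (b := (u - v⁻¹)) ?_ (f03)
      show (Matrix.of ![![u ^ 2, u, 1], ![(v ^ 2)⁻¹, v⁻¹, 1], ![1, 0, 0]]).det = (u - v⁻¹)
      simp only [Matrix.det_fin_three, Matrix.of_apply, Matrix.cons_val', Matrix.cons_val_zero,
        Matrix.cons_val_one, Matrix.head_cons, Matrix.empty_val', Matrix.cons_val_fin_one,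
        Matrix.head_fin_const, Matrix.cons_val_two, Matrix.tail_cons, ← inv_pow]
      ring
    · -- case (0, 3, 5)
      refine ne_of_eq_of_ne (b := -((u - v⁻¹) * (u + v⁻¹))) ?_ (neg_ne_zero.mpr (mul_ne_zero f03 g03))
      show (Matrix.of ![![u ^ 2, u, 1], ![(v ^ 2)⁻¹, v⁻¹, 1], ![0, 1, 0]]).det = -((u - v⁻¹) * (u + v⁻¹))
      simp only [Matrix.det_fin_three, Matrix.of_apply, Matrix.cons_val', Matrix.cons_val_zero,
        Matrix.cons_val_one, Matrix.head_cons, Matrix.empty_val', Matrix.cons_val_fin_one,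
        Matrix.head_fin_const, Matrix.cons_val_two, Matrix.tail_cons, ← inv_pow]
      ring
    · -- case (0, 4, 5)
      refine ne_of_eq_of_ne (b := (1 : k)) ?_ (one_ne_zero)
      show (Matrix.of ![![u ^ 2, u, 1], ![1, 0, 0], ![0, 1, 0]]).det = (1 : k)
      simp only [Matrix.det_fin_three, Matrix.of_apply, Matrix.cons_val', Matrix.cons_val_zero,
        Matrix.cons_val_one, Matrix.head_cons, Matrix.empty_val', Matrix.cons_val_fin_one,
        Matrix.head_fin_const, Matrix.cons_val_two, Matrix.tail_cons, ← inv_pow]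
      ring
    · -- case (1, 2, 3)
      refine ne_of_eq_of_ne (b := (u⁻¹ - v) * ((v - v⁻¹) * (u⁻¹ - v⁻¹))) ?_ (mul_ne_zero f12 (mul_ne_zero f23 f13))
      show (Matrix.of ![![(u ^ 2)⁻¹, u⁻¹, 1], ![v ^ 2, v, 1], ![(v ^ 2)⁻¹, v⁻¹, 1]]).det = (u⁻¹ - v) * ((v - v⁻¹) * (u⁻¹ - v⁻¹))
      simp only [Matrix.det_fin_three, Matrix.of_apply, Matrix.cons_val', Matrix.cons_val_zero,
        Matrix.cons_val_one, Matrix.head_cons, Matrix.empty_val', Matrix.cons_val_fin_one,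
        Matrix.head_fin_const, Matrix.cons_val_two, Matrix.tail_cons, ← inv_pow]
      ring
    · -- case (1, 2, 4)
      refine ne_of_eq_of_ne (b := (u⁻¹ - v)) ?_ (f12)
      show (Matrix.of ![![(u ^ 2)⁻¹, u⁻¹, 1], ![v ^ 2, v, 1], ![1, 0, 0]]).det = (u⁻¹ - v)
      simp only [Matrix.det_fin_three, Matrix.of_apply, Matrix.cons_val', Matrix.cons_val_zero,
        Matrix.cons_val_one, Matrix.head_cons, Matrix.empty_val', Matrix.cons_val_fin_one,
        Matrix.head_fin_const, Matrix.cons_val_two, Matrix.tail_cons, ← inv_pow]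
      ring
    · -- case (1, 2, 5)
      refine ne_of_eq_of_ne (b := -((u⁻¹ - v) * (u⁻¹ + v))) ?_ (neg_ne_zero.mpr (mul_ne_zero f12 g12))
      show (Matrix.of ![![(u ^ 2)⁻¹, u⁻¹, 1], ![v ^ 2, v, 1], ![0, 1, 0]]).det = -((u⁻¹ - v) * (u⁻¹ + v))
      simp only [Matrix.det_fin_three, Matrix.of_apply, Matrix.cons_val', Matrix.cons_val_zero,
        Matrix.cons_val_one, Matrix.head_cons, Matrix.empty_val', Matrix.cons_val_fin_one,
        Matrix.head_fin_const, Matrix.cons_val_two, Matrix.tail_cons, ← inv_pow]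
      ring
    · -- case (1, 3, 4)
      refine ne_of_eq_of_ne (b := (u⁻¹ - v⁻¹)) ?_ (f13)
      show (Matrix.of ![![(u ^ 2)⁻¹, u⁻¹, 1], ![(v ^ 2)⁻¹, v⁻¹, 1], ![1, 0, 0]]).det = (u⁻¹ - v⁻¹)
      simp only [Matrix.det_fin_three, Matrix.of_apply, Matrix.cons_val', Matrix.cons_val_zero,
        Matrix.cons_val_one, Matrix.head_cons, Matrix.empty_val', Matrix.cons_val_fin_one,
        Matrix.head_fin_const, Matrix.cons_val_two, Matrix.tail_cons, ← inv_pow]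
      ring
    · -- case (1, 3, 5)
      refine ne_of_eq_of_ne (b := -((u⁻¹ - v⁻¹) * (u⁻¹ + v⁻¹))) ?_ (neg_ne_zero.mpr (mul_ne_zero f13 g13))
      show (Matrix.of ![![(u ^ 2)⁻¹, u⁻¹, 1], ![(v ^ 2)⁻¹, v⁻¹, 1], ![0, 1, 0]]).det = -((u⁻¹ - v⁻¹) * (u⁻¹ + v⁻¹))
      simp only [Matrix.det_fin_three, Matrix.of_apply, Matrix.cons_val', Matrix.cons_val_zero,
        Matrix.cons_val_one, Matrix.head_cons, Matrix.empty_val', Matrix.cons_val_fin_one,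
        Matrix.head_fin_const, Matrix.cons_val_two, Matrix.tail_cons, ← inv_pow]
      ring
    · -- case (1, 4, 5)
      refine ne_of_eq_of_ne (b := (1 : k)) ?_ (one_ne_zero)
      show (Matrix.of ![![(u ^ 2)⁻¹, u⁻¹, 1], ![1, 0, 0], ![0, 1, 0]]).det = (1 : k)
      simp only [Matrix.det_fin_three, Matrix.of_apply, Matrix.cons_val', Matrix.cons_val_zero,
        Matrix.cons_val_one, Matrix.head_cons, Matrix.empty_val', Matrix.cons_val_fin_one,
        Matrix.head_fin_const, Matrix.cons_val_two, Matrix.tail_cons, ← inv_pow]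
      ring
    · -- case (2, 3, 4)
      refine ne_of_eq_of_ne (b := (v - v⁻¹)) ?_ (f23)
      show (Matrix.of ![![v ^ 2, v, 1], ![(v ^ 2)⁻¹, v⁻¹, 1], ![1, 0, 0]]).det = (v - v⁻¹)
      simp only [Matrix.det_fin_three, Matrix.of_apply, Matrix.cons_val', Matrix.cons_val_zero,
        Matrix.cons_val_one, Matrix.head_cons, Matrix.empty_val', Matrix.cons_val_fin_one,
        Matrix.head_fin_const, Matrix.cons_val_two, Matrix.tail_cons, ← inv_pow]
      ring
    · -- case (2, 3, 5)
      refine ne_of_eq_of_ne (b := -((v - v⁻¹) * (v + v⁻¹))) ?_ (neg_ne_zero.mpr (mul_ne_zero f23 g23))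
      show (Matrix.of ![![v ^ 2, v, 1], ![(v ^ 2)⁻¹, v⁻¹, 1], ![0, 1, 0]]).det = -((v - v⁻¹) * (v + v⁻¹))
      simp only [Matrix.det_fin_three, Matrix.of_apply, Matrix.cons_val', Matrix.cons_val_zero,
        Matrix.cons_val_one, Matrix.head_cons, Matrix.empty_val', Matrix.cons_val_fin_one,
        Matrix.head_fin_const, Matrix.cons_val_two, Matrix.tail_cons, ← inv_pow]
      ring
    · -- case (2, 4, 5)
      refine ne_of_eq_of_ne (b := (1 : k)) ?_ (one_ne_zero)
      show (Matrix.of ![![v ^ 2, v, 1], ![1, 0, 0], ![0, 1, 0]]).det = (1 : k)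
      simp only [Matrix.det_fin_three, Matrix.of_apply, Matrix.cons_val', Matrix.cons_val_zero,
        Matrix.cons_val_one, Matrix.head_cons, Matrix.empty_val', Matrix.cons_val_fin_one,
        Matrix.head_fin_const, Matrix.cons_val_two, Matrix.tail_cons, ← inv_pow]
      ring
    · -- case (3, 4, 5)
      refine ne_of_eq_of_ne (b := (1 : k)) ?_ (one_ne_zero)
      show (Matrix.of ![![(v ^ 2)⁻¹, v⁻¹, 1], ![1, 0, 0], ![0, 1, 0]]).det = (1 : k)
      simp only [Matrix.det_fin_three, Matrix.of_apply, Matrix.cons_val', Matrix.cons_val_zero,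
        Matrix.cons_val_one, Matrix.head_cons, Matrix.empty_val', Matrix.cons_val_fin_one,
        Matrix.head_fin_const, Matrix.cons_val_two, Matrix.tail_cons, ← inv_pow]
      ring
  intro i j l hij hil hjl
  have hdet : (Matrix.of ![sixTriples u v i, sixTriples u v j, sixTriples u v l]).det ≠ 0 := by
    set R := sixTriples u v with hR
    rcases lt_trichotomy i j with h1 | h1 | h1
    · rcases lt_trichotomy j l with h2 | h2 | h2
      · exact sorted i j l h1 h2
      · exact absurd h2 hjl
      · rcases lt_trichotomy i l with h3 | h3 | h3
        · rw [det_swap23]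
          simpa using sorted i l j h3 h2
        · exact absurd h3 hil
        · rw [det_swap23 (R i) (R j) (R l), det_swap12 (R i) (R l) (R j)]
          simpa using sorted l i j h3 h1
    · exact absurd h1 hij
    · rcases lt_trichotomy i l with h2 | h2 | h2
      · rw [det_swap12]
        simpa using sorted j i l h1 h2
      · exact absurd h2 hil
      · rcases lt_trichotomy j l with h3 | h3 | h3
        · rw [det_swap13 (R i) (R j) (R l), det_swap12 (R l) (R j) (R i)]
          simpa using sorted j l i h3 h2
        · exact absurd h3 hjl
        · rw [det_swap13 (R i) (R j) (R l)]
          simpa using sorted l j i h3 h1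
  refine ⟨hdet, ?_⟩
  rintro ⟨a, b, c, hne, hvan⟩
  have hvi := hvan i (by simp)
  have hvj := hvan j (by simp)
  have hvl := hvan l (by simp)
  have hmv : (Matrix.of ![sixTriples u v i, sixTriples u v j, sixTriples u v l]).mulVec
      ![a, b, c] = 0 := by
    funext m
    fin_cases m
    · simpa [Matrix.mulVec, dotProduct, Fin.sum_univ_three, mul_comm] using hvi
    · simpa [Matrix.mulVec, dotProduct, Fin.sum_univ_three, mul_comm] using hvj
    · simpa [Matrix.mulVec, dotProduct, Fin.sum_univ_three, mul_comm] using hvl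
  have hz := Matrix.eq_zero_of_mulVec_eq_zero hdet hmv
  have ha : a = 0 := by have := congrFun hz 0; simpa using this
  have hb : b = 0 := by have := congrFun hz 1; simpa using this
  have hc : c = 0 := by have := congrFun hz 2; simpa using this
  exact hne (by simp [ha, hb, hc])
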